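/- Let A be the 2-dimensional complex vector space with basis {e₁, e₂} with dendriform products e₁≻e₂ = e₂, e₁≻e₁ = e₁ (others zero). Then r = a₁₁e₁⊗e₁ + a₁₂e₁⊗e₂ + a₂₁e₂⊗e₁ + a₂₂e₂⊗e₂ with a₁₂ ≠ 0 and a₂₁ = a₁₁a₂₂/a₁₂ is a solution of the D-equation r₁₂∗r₁₃ = r₁₃≺r₂₃ + r₂₃≻r₁₂. -/
import Mathlib


open Finset in
/-- The D-equation `r₁₂ ∗ r₁₃ = r₁₃ ≺ r₂₃ + r₂₃ ≻ r₁₂` in coordinates: `mp i j k`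
(resp. `ms i j k`) is the coefficient of `e k` in `e i ≺ e j` (resp. `e i ≻ e j`),
and `r i j` is the coefficient of `e i ⊗ e j` in `r`. -/
def DEquation {n : ℕ} (mp ms : Fin n → Fin n → Fin n → ℂ)
    (r : Fin n → Fin n → ℂ) : Prop :=
  ∀ p q s : Fin n,
    (∑ i, ∑ k, r i q * r k s * (mp i k p + ms i k p))
      = (∑ j, ∑ l, r p j * r q l * mp j l s)
        + (∑ i, ∑ l, r i s * r p l * ms i l q)

/-- `≻`-structure constants of the dendriform algebra `e₁ ≻ e₂ = e₂`, `e₁ ≻ e₁ = e₁`,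
all `≺`-products zero. -/
def succD21 : Fin 2 → Fin 2 → Fin 2 → ℂ := fun i j k =>
  if (i = 0 ∧ j = 0 ∧ k = 0) ∨ (i = 0 ∧ j = 1 ∧ k = 1) then 1 else 0

/-- In the dendriform algebra with `e₁ ≻ e₂ = e₂`, `e₁ ≻ e₁ = e₁` (others zero),
`r = a₁₁ e₁⊗e₁ + a₁₂ e₁⊗e₂ + a₂₁ e₂⊗e₁ + a₂₂ e₂⊗e₂` with `a₁₂ ≠ 0` and
`a₂₁ = a₁₁ a₂₂ / a₁₂` is a solution of the D-equation. -/
theorem stmt_12 (a₁₁ a₁₂ a₂₁ a₂₂ : ℂ) (h12 : a₁₂ ≠ 0)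
    (h21 : a₂₁ = a₁₁ * a₂₂ / a₁₂) :
    DEquation (fun _ _ _ => 0) succD21 (fun i j =>
      if i = 0 ∧ j = 0 then a₁₁ else if i = 0 ∧ j = 1 then a₁₂
      else if i = 1 ∧ j = 0 then a₂₁ else a₂₂) := by
  subst h21
  intro p q s
  fin_cases p <;> fin_cases q <;> fin_cases s <;>
    simp [DEquation, succD21, Fin.sum_univ_two] <;> try ring1
  all_goals field_simp
  all_goals ring
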